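/- Let ω^{ij} be a smooth antisymmetric bivector and Γ^i_{jk} smooth Christoffel symbols on an open set U ⊆ ℝⁿ such that the pair (ω, ∇) is Poisson-compatible. Let H^{ij}_{mn} := (1/2) ω^{is}[(T^j_{nm;s} − 2 R^j_{nms}) − (T^j_{mn;s} − 2 R^j_{mns})] denote the (antisymmetric-in-(m,n)) coefficients of the 2-form H^{ij}. Then for all i, j and all p, m, n, at every point of U: Σ_{cyclic (p,m,n)} [∂_p H^{ij}_{mn} + Γ^i_{rp} H^{rj}_{mn} + Γ^j_{rp} H^{ir}_{mn}] = 0 (sum over r inside, and cyclic sum over the three cyclic permutations of (p, m, n)); equivalently, the 3-form dH^{ij} + Γ^i_{rp} dx^p ∧ H^{rj} + Γ^j_{rp} dx^p ∧ H^{ir} vanishes for all i, j. -/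

import Mathlib

namespace Stmt11

variable {n : ℕ}

/-- Partial derivative in the `i`-th coordinate direction. -/
noncomputable def pd (i : Fin n) (f : (Fin n → ℝ) → ℝ) (x : Fin n → ℝ) : ℝ :=
  fderiv ℝ f x (Pi.single i 1)

/-- Torsion `T^i_{jk} = Γ^i_{jk} - Γ^i_{kj}`. -/
def Tor (Γ : Fin n → Fin n → Fin n → (Fin n → ℝ) → ℝ) (i j k : Fin n)
    (x : Fin n → ℝ) : ℝ :=
  Γ i j k x - Γ i k j x

/-- Curvature `R^l_{ijk} = ∂_j Γ^l_{ki} − ∂_k Γ^l_{ji} + Γ^m_{ki} Γ^l_{jm} − Γ^m_{ji} Γ^l_{km}`. -/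
noncomputable def Rc (Γ : Fin n → Fin n → Fin n → (Fin n → ℝ) → ℝ) (l i j k : Fin n)
    (x : Fin n → ℝ) : ℝ :=
  pd j (Γ l k i) x - pd k (Γ l j i) x
    + ∑ m, Γ m k i x * Γ l j m x - ∑ m, Γ m j i x * Γ l k m x

/-- Covariant derivative of the torsion:
`T^j_{ab;s} = ∂_s T^j_{ab} + Γ^j_{sp} T^p_{ab} − Γ^p_{sa} T^j_{pb} − Γ^p_{sb} T^j_{ap}`. -/
noncomputable def covT (Γ : Fin n → Fin n → Fin n → (Fin n → ℝ) → ℝ) (j a b s : Fin n)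
    (x : Fin n → ℝ) : ℝ :=
  pd s (Tor Γ j a b) x + ∑ p, Γ j s p x * Tor Γ p a b x
    - ∑ p, Γ p s a x * Tor Γ j p b x - ∑ p, Γ p s b x * Tor Γ j a p x

/-- The pair `(ω, ∇)` is Poisson-compatible on `U`:
`∂_m ω^{ij} + ω^{kj} Γ^i_{km} + ω^{ik} Γ^j_{km} = 0`. -/
def PoissonCompat (U : Set (Fin n → ℝ)) (ω : Fin n → Fin n → (Fin n → ℝ) → ℝ)
    (Γ : Fin n → Fin n → Fin n → (Fin n → ℝ) → ℝ) : Prop :=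
  ∀ i j m, ∀ x ∈ U,
    pd m (ω i j) x + ∑ k, ω k j x * Γ i k m x + ∑ k, ω i k x * Γ j k m x = 0

/-- Coefficients of the 2-form `H^{ij}`:
`H^{ij}_{mn} = (1/2) ω^{is}[(T^j_{nm;s} − 2R^j_{nms}) − (T^j_{mn;s} − 2R^j_{mns})]`. -/
noncomputable def Hc (ω : Fin n → Fin n → (Fin n → ℝ) → ℝ)
    (Γ : Fin n → Fin n → Fin n → (Fin n → ℝ) → ℝ) (i j m m' : Fin n)
    (x : Fin n → ℝ) : ℝ :=
  (1 / 2 : ℝ) * ∑ s, ω i s x *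
    ((covT Γ j m' m s x - 2 * Rc Γ j m' m s x)
      - (covT Γ j m m' s x - 2 * Rc Γ j m m' s x))

section Tools
variable {f g : (Fin n → ℝ) → ℝ} {x : Fin n → ℝ} {i : Fin n}

theorem pd_add (hf : DifferentiableAt ℝ f x) (hg : DifferentiableAt ℝ g x) :
    pd i (fun y => f y + g y) x = pd i f x + pd i g x := by
  simp [pd, fderiv_fun_add hf hg]

theorem pd_sub (hf : DifferentiableAt ℝ f x) (hg : DifferentiableAt ℝ g x) :
    pd i (fun y => f y - g y) x = pd i f x - pd i g x := by
  simp [pd, fderiv_fun_sub hf hg]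

theorem pd_neg : pd i (fun y => -f y) x = - pd i f x := by
  simp [pd, fderiv_neg]

theorem pd_mul (hf : DifferentiableAt ℝ f x) (hg : DifferentiableAt ℝ g x) :
    pd i (fun y => f y * g y) x = f x * pd i g x + g x * pd i f x := by
  simp [pd, fderiv_fun_mul hf hg]

theorem pd_sum {F : Fin n → (Fin n → ℝ) → ℝ}
    (h : ∀ k, DifferentiableAt ℝ (F k) x) :
    pd i (fun y => ∑ k, F k y) x = ∑ k, pd i (F k) x := by
  simp [pd, fderiv_fun_sum (fun k _ => h k)]

theorem pd_congr {U : Set (Fin n → ℝ)} (hU : IsOpen U) (hx : x ∈ U)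
    (h : ∀ y ∈ U, f y = g y) : pd i f x = pd i g x := by
  unfold pd
  rw [Filter.EventuallyEq.fderiv_eq
    (Filter.eventuallyEq_of_mem (hU.mem_nhds hx) h)]

theorem pd_comm (hf : ContDiffAt ℝ (⊤ : ℕ∞) f x) (p q : Fin n) :
    pd p (pd q f) x = pd q (pd p f) x := by
  have hd : DifferentiableAt ℝ (fderiv ℝ f) x :=
    (hf.fderiv_right (m := 1) (WithTop.coe_le_coe.mpr le_top)).differentiableAt one_ne_zero
  have key : ∀ a b : Fin n,
      pd a (pd b f) x = fderiv ℝ (fderiv ℝ f) x (Pi.single a 1) (Pi.single b 1) := by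
    intro a b
    have h0 : pd a (pd b f) x
        = fderiv ℝ (fun z => fderiv ℝ f z (Pi.single b 1)) x (Pi.single a 1) := rfl
    rw [h0, fderiv_clm_apply hd (differentiableAt_const _)]
    simp
  rw [key, key, (hf.isSymmSndFDerivAt (by simp; exact WithTop.coe_le_coe.mpr le_top)) (Pi.single p 1) (Pi.single q 1)]

end Tools

/-- Value form of `C^j_{s a b} := (covT Γ j b a s - Rc Γ j b a s + Rc Γ j a b s)` in atoms. -/
def CV (g : Fin n → Fin n → Fin n → ℝ) (d : Fin n → Fin n → Fin n → Fin n → ℝ)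
    (j s a b : Fin n) : ℝ :=
  ((d s j b a - d s j a b) - (d a j s b - d s j a b) + (d b j s a - d s j b a))
  + ∑ q, (g j s q * (g q b a - g q a b) - g q s b * (g j q a - g j a q)
      - g q s a * (g j b q - g j q b)
      - (g q s b * g j a q - g q a b * g j s q) + (g q s a * g j b q - g q b a * g j s q))

/-- Atom form of `∂_p C^j_{s a b}`. -/
def PCV (g : Fin n → Fin n → Fin n → ℝ) (d : Fin n → Fin n → Fin n → Fin n → ℝ)
    (e : Fin n → Fin n → Fin n → Fin n → Fin n → ℝ) (p j s a b : Fin n) : ℝ :=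
  ((e p s j b a - e p s j a b) - (e p a j s b - e p s j a b) + (e p b j s a - e p s j b a))
  + ∑ q, (d p j s q * (g q b a - g q a b) + g j s q * (d p q b a - d p q a b)
      - d p q s b * (g j q a - g j a q) - g q s b * (d p j q a - d p j a q)
      - d p q s a * (g j b q - g j q b) - g q s a * (d p j b q - d p j q b)
      - (d p q s b * g j a q + g q s b * d p j a q - (d p q a b * g j s q + g q a b * d p j s q))
      + (d p q s a * g j b q + g q s a * d p j b q - (d p q b a * g j s q + g q b a * d p j s q)))

section Main
variable {U : Set (Fin n → ℝ)} (hU : IsOpen U)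
  {ω : Fin n → Fin n → (Fin n → ℝ) → ℝ}
  {Γ : Fin n → Fin n → Fin n → (Fin n → ℝ) → ℝ}
  (hωs : ∀ i j, ContDiffOn ℝ (⊤ : ℕ∞) (ω i j) U)
  (hΓs : ∀ i j k, ContDiffOn ℝ (⊤ : ℕ∞) (Γ i j k) U)

include hU hΓs in
theorem hΓat {y : Fin n → ℝ} (hy : y ∈ U) (a b c : Fin n) :
    ContDiffAt ℝ (⊤ : ℕ∞) (Γ a b c) y :=
  (hΓs a b c).contDiffAt (hU.mem_nhds hy)

include hU hΓs in
theorem hΓd {y : Fin n → ℝ} (hy : y ∈ U) (a b c : Fin n) :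
    DifferentiableAt ℝ (Γ a b c) y :=
  (hΓat hU hΓs hy a b c).differentiableAt (by simp)

include hU hΓs in
theorem hdΓd {y : Fin n → ℝ} (hy : y ∈ U) (s a b c : Fin n) :
    DifferentiableAt ℝ (pd s (Γ a b c)) y := by
  have h1 : ContDiffAt ℝ (⊤ : ℕ∞) (fderiv ℝ (Γ a b c)) y :=
    (hΓat hU hΓs hy a b c).fderiv_right (by simp)
  exact ((h1.clm_apply contDiffAt_const).differentiableAt (by simp) :
    DifferentiableAt ℝ (fun z => fderiv ℝ (Γ a b c) z (Pi.single s 1)) y)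

include hU hωs in
theorem hωd {y : Fin n → ℝ} (hy : y ∈ U) (a b : Fin n) :
    DifferentiableAt ℝ (ω a b) y :=
  ((hωs a b).contDiffAt (hU.mem_nhds hy)).differentiableAt (by simp)

include hU hΓs in
theorem pd_Tor {y : Fin n → ℝ} (hy : y ∈ U) (s a b c : Fin n) :
    pd s (Tor Γ a b c) y = pd s (Γ a b c) y - pd s (Γ a c b) y := by
  show pd s (fun z => Γ a b c z - Γ a c b z) y = _
  exact pd_sub (hΓd hU hΓs hy a b c) (hΓd hU hΓs hy a c b)

theorem covT_anti (j a b s : Fin n) (y : Fin n → ℝ) :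
    covT Γ j a b s y = - covT Γ j b a s y := by
  have h1 : pd s (Tor Γ j a b) y = - pd s (Tor Γ j b a) y := by
    rw [show Tor Γ j a b = fun z => -(Tor Γ j b a z) from funext fun z => by
      simp only [Tor]; ring]
    exact pd_neg
  have h2 : ∀ (F G : Fin n → ℝ), (∀ q, F q = -G q) → ∑ q, F q = -∑ q, G q := by
    intro F G h
    rw [← Finset.sum_neg_distrib]
    exact Finset.sum_congr rfl fun q _ => h q
  simp only [covT, h1]
  rw [h2 (fun p => Γ j s p y * Tor Γ p a b y) (fun p => Γ j s p y * Tor Γ p b a y)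
      (fun q => by simp only [Tor]; ring),
    h2 (fun p => Γ p s a y * Tor Γ j p b y) (fun p => Γ p s a y * Tor Γ j b p y)
      (fun q => by simp only [Tor]; ring),
    h2 (fun p => Γ p s b y * Tor Γ j a p y) (fun p => Γ p s b y * Tor Γ j p a y)
      (fun q => by simp only [Tor]; ring)]
  ring

include hU hΓs in
theorem Cval {y : Fin n → ℝ} (hy : y ∈ U) (j s a b : Fin n) :
    covT Γ j b a s y - Rc Γ j b a s y + Rc Γ j a b s y
      = CV (fun a b c => Γ a b c y) (fun q a b c => pd q (Γ a b c) y) j s a b := by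
  simp only [covT, Rc, CV, Tor]
  rw [pd_Tor hU hΓs hy]
  simp only [mul_sub, sub_mul, mul_add, add_mul, Finset.sum_sub_distrib,
    Finset.sum_add_distrib]
  ring

include hU hΓs hωs in
theorem Hc_val {y : Fin n → ℝ} (hy : y ∈ U) (i j a b : Fin n) :
    Hc ω Γ i j a b y
      = ∑ s, ω i s y * CV (fun a b c => Γ a b c y) (fun q a b c => pd q (Γ a b c) y) j s a b := by
  unfold Hc
  rw [Finset.mul_sum]
  refine Finset.sum_congr rfl fun s _ => ?_
  have h1 := covT_anti (Γ := Γ) j a b s y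
  have h2 := Cval hU hΓs hy j s a b
  rw [h1]
  linear_combination (ω i s y) * h2

include hU hΓs in
theorem hCVd {y : Fin n → ℝ} (hy : y ∈ U) (j s a b : Fin n) :
    DifferentiableAt ℝ
      (fun z => CV (fun a b c => Γ a b c z) (fun q a b c => pd q (Γ a b c) z) j s a b) y := by
  have H1 : ∀ a b c : Fin n, DifferentiableAt ℝ (Γ a b c) y := hΓd hU hΓs hy
  have H2 : ∀ s a b c : Fin n, DifferentiableAt ℝ (pd s (Γ a b c)) y := hdΓd hU hΓs hy
  simp only [CV]
  fun_prop

include hU hΓs in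
theorem pd_CV {x : Fin n → ℝ} (hx : x ∈ U) (p j s a b : Fin n) :
    pd p (fun z => CV (fun a b c => Γ a b c z) (fun q a b c => pd q (Γ a b c) z) j s a b) x
      = PCV (fun a b c => Γ a b c x) (fun q a b c => pd q (Γ a b c) x)
          (fun p q a b c => pd p (pd q (Γ a b c)) x) p j s a b := by
  have H1 : ∀ a b c : Fin n, DifferentiableAt ℝ (Γ a b c) x := hΓd hU hΓs hx
  have H2 : ∀ s a b c : Fin n, DifferentiableAt ℝ (pd s (Γ a b c)) x := hdΓd hU hΓs hx
  simp (disch := fun_prop) only [CV, pd_add, pd_sub, pd_mul, pd_sum, pd_neg]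
  simp only [PCV]
  congr 1
  exact Finset.sum_congr rfl fun q _ => by ring

include hU hΓs hωs in
theorem pd_Hc (hpc : PoissonCompat U ω Γ) {x : Fin n → ℝ} (hx : x ∈ U) (i j p a b : Fin n) :
    pd p (Hc ω Γ i j a b) x
      = ∑ s, ((-(∑ k, ω k s x * Γ i k p x) - ∑ k, ω i k x * Γ s k p x)
            * CV (fun a b c => Γ a b c x) (fun q a b c => pd q (Γ a b c) x) j s a b
          + ω i s x * PCV (fun a b c => Γ a b c x) (fun q a b c => pd q (Γ a b c) x)
              (fun p q a b c => pd p (pd q (Γ a b c)) x) p j s a b) := by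
  rw [pd_congr hU hx (fun y hy => Hc_val hU hωs hΓs hy i j a b)]
  rw [pd_sum (F := fun s y => ω i s y * CV (fun a b c => Γ a b c y) (fun q a b c => pd q (Γ a b c) y) j s a b)
    (fun s => (hωd hU hωs hx i s).fun_mul (hCVd hU hΓs hx j s a b))]
  refine Finset.sum_congr rfl fun s _ => ?_
  rw [pd_mul (hωd hU hωs hx i s) (hCVd hU hΓs hx j s a b), pd_CV hU hΓs hx p j s a b]
  have hcom : pd p (ω i s) x
      = -(∑ k, ω k s x * Γ i k p x) - ∑ k, ω i k x * Γ s k p x := by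
    have := hpc i s p x hx
    linarith
  rw [hcom]
  ring

end Main

/-- `K`-tensor in atoms. -/
noncomputable def Kex (g : Fin n → Fin n → Fin n → ℝ) (d : Fin n → Fin n → Fin n → Fin n → ℝ)
    (e : Fin n → Fin n → Fin n → Fin n → Fin n → ℝ) (j s p a b : Fin n) : ℝ :=
  PCV g d e p j s a b + ∑ r, (g j r p * CV g d r s a b - g r s p * CV g d j r a b)

theorem Kzero (g : Fin n → Fin n → Fin n → ℝ) (d : Fin n → Fin n → Fin n → Fin n → ℝ)
    (e : Fin n → Fin n → Fin n → Fin n → Fin n → ℝ)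
    (he : ∀ p q a b c, e p q a b c = e q p a b c) (j s p a b : Fin n) :
    Kex g d e j s p a b + Kex g d e j s a b p + Kex g d e j s b p a = 0 := by
  simp only [Kex, PCV, CV, mul_add, add_mul, mul_sub, sub_mul, neg_mul, mul_neg,
    Finset.mul_sum, Finset.sum_mul, Finset.sum_add_distrib, Finset.sum_sub_distrib,
    Finset.sum_neg_distrib, neg_neg]
  have h1 : (∑ x : Fin n, ((d p j s x) * (g x b a))) = (∑ x : Fin n, ((g x b a) * (d p j s x))) := Finset.sum_congr rfl fun u _ => by ring
  have h2 : (∑ x : Fin n, ((d p j s x) * (g x a b))) = (∑ x : Fin n, ((g x a b) * (d p j s x))) := Finset.sum_congr rfl fun u _ => by ring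
  have h3 : (∑ x : Fin n, ((g j s x) * (d p x b a))) = (∑ x : Fin n, ((d p x b a) * (g j s x))) := Finset.sum_congr rfl fun u _ => by ring
  have h4 : (∑ x : Fin n, ((g j s x) * (d p x a b))) = (∑ x : Fin n, ((d p x a b) * (g j s x))) := Finset.sum_congr rfl fun u _ => by ring
  have h5 : (∑ x : Fin n, ((d p x s b) * (g j x a))) = (∑ x : Fin n, ((g j x a) * (d p x s b))) := Finset.sum_congr rfl fun u _ => by ring
  have h6 : (∑ x : Fin n, ((d p x s a) * (g j x b))) = (∑ x : Fin n, ((g j x b) * (d p x s a))) := Finset.sum_congr rfl fun u _ => by ring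
  have h7 : (∑ x : Fin n, ((g j x p) * (d a x s b))) = (∑ x : Fin n, ((d a x s b) * (g j x p))) := Finset.sum_congr rfl fun u _ => by ring
  have h8 : (∑ x : Fin n, ((g j x p) * (d b x s a))) = (∑ x : Fin n, ((d b x s a) * (g j x p))) := Finset.sum_congr rfl fun u _ => by ring
  have h9 : (∑ x : Fin n, (∑ i : Fin n, ((g j x p) * ((g x s i) * (g i b a))))) = (∑ x : Fin n, (∑ i : Fin n, ((g j x p) * ((g i b a) * (g x s i))))) := Finset.sum_congr rfl fun u _ => Finset.sum_congr rfl fun v _ => by ring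
  have h10 : (∑ x : Fin n, (∑ i : Fin n, ((g j x p) * ((g x s i) * (g i a b))))) = (∑ x : Fin n, (∑ i : Fin n, ((g j x p) * ((g i a b) * (g x s i))))) := Finset.sum_congr rfl fun u _ => Finset.sum_congr rfl fun v _ => by ring
  have h11 : (∑ x : Fin n, (∑ i : Fin n, ((g j x p) * ((g i s b) * (g x i a))))) = (∑ x : Fin n, (∑ i : Fin n, ((g x s b) * ((g i x a) * (g j i p))))) := by rw [Finset.sum_comm]; exact Finset.sum_congr rfl fun u _ => Finset.sum_congr rfl fun v _ => by ring
  have h12 : (∑ x : Fin n, (∑ i : Fin n, ((g j x p) * ((g i s a) * (g x i b))))) = (∑ x : Fin n, (∑ i : Fin n, ((g x s a) * ((g i x b) * (g j i p))))) := by rw [Finset.sum_comm]; exact Finset.sum_congr rfl fun u _ => Finset.sum_congr rfl fun v _ => by ring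
  have h13 : (∑ x : Fin n, (∑ i : Fin n, ((g x s p) * ((g j x i) * (g i b a))))) = (∑ x : Fin n, (∑ i : Fin n, ((g x s p) * ((g i b a) * (g j x i))))) := Finset.sum_congr rfl fun u _ => Finset.sum_congr rfl fun v _ => by ring
  have h14 : (∑ x : Fin n, (∑ i : Fin n, ((g x s p) * ((g j x i) * (g i a b))))) = (∑ x : Fin n, (∑ i : Fin n, ((g x s p) * ((g i a b) * (g j x i))))) := Finset.sum_congr rfl fun u _ => Finset.sum_congr rfl fun v _ => by ring
  have h15 : (∑ x : Fin n, (∑ i : Fin n, ((g x s p) * ((g i x b) * (g j i a))))) = (∑ x : Fin n, (∑ i : Fin n, ((g j x a) * ((g i s p) * (g x i b))))) := by rw [Finset.sum_comm]; exact Finset.sum_congr rfl fun u _ => Finset.sum_congr rfl fun v _ => by ring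
  have h16 : (∑ x : Fin n, (∑ i : Fin n, ((g x s p) * ((g i x a) * (g j i b))))) = (∑ x : Fin n, (∑ i : Fin n, ((g j x b) * ((g i s p) * (g x i a))))) := by rw [Finset.sum_comm]; exact Finset.sum_congr rfl fun u _ => Finset.sum_congr rfl fun v _ => by ring
  have h17 : (∑ x : Fin n, ((d a j s x) * (g x p b))) = (∑ x : Fin n, ((g x p b) * (d a j s x))) := Finset.sum_congr rfl fun u _ => by ring
  have h18 : (∑ x : Fin n, ((d a j s x) * (g x b p))) = (∑ x : Fin n, ((g x b p) * (d a j s x))) := Finset.sum_congr rfl fun u _ => by ring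
  have h19 : (∑ x : Fin n, ((g j s x) * (d a x p b))) = (∑ x : Fin n, ((d a x p b) * (g j s x))) := Finset.sum_congr rfl fun u _ => by ring
  have h20 : (∑ x : Fin n, ((g j s x) * (d a x b p))) = (∑ x : Fin n, ((d a x b p) * (g j s x))) := Finset.sum_congr rfl fun u _ => by ring
  have h21 : (∑ x : Fin n, ((d a x s p) * (g j x b))) = (∑ x : Fin n, ((g j x b) * (d a x s p))) := Finset.sum_congr rfl fun u _ => by ring
  have h22 : (∑ x : Fin n, ((g j x a) * (d b x s p))) = (∑ x : Fin n, ((d b x s p) * (g j x a))) := Finset.sum_congr rfl fun u _ => by ring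
  have h23 : (∑ x : Fin n, (∑ i : Fin n, ((g j x a) * ((g x s i) * (g i p b))))) = (∑ x : Fin n, (∑ i : Fin n, ((g j x a) * ((g i p b) * (g x s i))))) := Finset.sum_congr rfl fun u _ => Finset.sum_congr rfl fun v _ => by ring
  have h24 : (∑ x : Fin n, (∑ i : Fin n, ((g j x a) * ((g x s i) * (g i b p))))) = (∑ x : Fin n, (∑ i : Fin n, ((g j x a) * ((g i b p) * (g x s i))))) := Finset.sum_congr rfl fun u _ => Finset.sum_congr rfl fun v _ => by ring
  have h25 : (∑ x : Fin n, (∑ i : Fin n, ((g j x a) * ((g i s b) * (g x i p))))) = (∑ x : Fin n, (∑ i : Fin n, ((g x s b) * ((g i x p) * (g j i a))))) := by rw [Finset.sum_comm]; exact Finset.sum_congr rfl fun u _ => Finset.sum_congr rfl fun v _ => by ring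
  have h26 : (∑ x : Fin n, (∑ i : Fin n, ((g x s a) * ((g j x i) * (g i p b))))) = (∑ x : Fin n, (∑ i : Fin n, ((g x s a) * ((g i p b) * (g j x i))))) := Finset.sum_congr rfl fun u _ => Finset.sum_congr rfl fun v _ => by ring
  have h27 : (∑ x : Fin n, (∑ i : Fin n, ((g x s a) * ((g j x i) * (g i b p))))) = (∑ x : Fin n, (∑ i : Fin n, ((g x s a) * ((g i b p) * (g j x i))))) := Finset.sum_congr rfl fun u _ => Finset.sum_congr rfl fun v _ => by ring
  have h28 : (∑ x : Fin n, (∑ i : Fin n, ((g x s a) * ((g i x p) * (g j i b))))) = (∑ x : Fin n, (∑ i : Fin n, ((g j x b) * ((g i s a) * (g x i p))))) := by rw [Finset.sum_comm]; exact Finset.sum_congr rfl fun u _ => Finset.sum_congr rfl fun v _ => by ring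
  have h29 : (∑ x : Fin n, ((d b j s x) * (g x a p))) = (∑ x : Fin n, ((g x a p) * (d b j s x))) := Finset.sum_congr rfl fun u _ => by ring
  have h30 : (∑ x : Fin n, ((d b j s x) * (g x p a))) = (∑ x : Fin n, ((g x p a) * (d b j s x))) := Finset.sum_congr rfl fun u _ => by ring
  have h31 : (∑ x : Fin n, ((g j s x) * (d b x a p))) = (∑ x : Fin n, ((d b x a p) * (g j s x))) := Finset.sum_congr rfl fun u _ => by ring
  have h32 : (∑ x : Fin n, ((g j s x) * (d b x p a))) = (∑ x : Fin n, ((d b x p a) * (g j s x))) := Finset.sum_congr rfl fun u _ => by ring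
  have h33 : (∑ x : Fin n, (∑ i : Fin n, ((g j x b) * ((g x s i) * (g i a p))))) = (∑ x : Fin n, (∑ i : Fin n, ((g j x b) * ((g i a p) * (g x s i))))) := Finset.sum_congr rfl fun u _ => Finset.sum_congr rfl fun v _ => by ring
  have h34 : (∑ x : Fin n, (∑ i : Fin n, ((g j x b) * ((g x s i) * (g i p a))))) = (∑ x : Fin n, (∑ i : Fin n, ((g j x b) * ((g i p a) * (g x s i))))) := Finset.sum_congr rfl fun u _ => Finset.sum_congr rfl fun v _ => by ring
  have h35 : (∑ x : Fin n, (∑ i : Fin n, ((g x s b) * ((g j x i) * (g i a p))))) = (∑ x : Fin n, (∑ i : Fin n, ((g x s b) * ((g i a p) * (g j x i))))) := Finset.sum_congr rfl fun u _ => Finset.sum_congr rfl fun v _ => by ring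
  have h36 : (∑ x : Fin n, (∑ i : Fin n, ((g x s b) * ((g j x i) * (g i p a))))) = (∑ x : Fin n, (∑ i : Fin n, ((g x s b) * ((g i p a) * (g j x i))))) := Finset.sum_congr rfl fun u _ => Finset.sum_congr rfl fun v _ => by ring
  linear_combination - (he p a j s b) + (he p b j s a) + h1 - h2 + h3 - h4 - h5 + h6 - h7 + h8 + h9 - h10 - h11 + h12 - h13 + h14 + h15 - h16 - (he a b j s p) + h17 - h18 + h19 - h20 - h21 - h22 + h23 - h24 + h25 - h26 + h27 + h28 + h29 - h30 + h31 - h32 + h33 - h34 - h35 + h36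


theorem blockEq (w : Fin n → Fin n → ℝ) (g : Fin n → Fin n → Fin n → ℝ)
    (d : Fin n → Fin n → Fin n → Fin n → ℝ)
    (e : Fin n → Fin n → Fin n → Fin n → Fin n → ℝ) (i j P A B : Fin n) :
    (∑ s, ((-∑ k, w k s * g i k P - ∑ k, w i k * g s k P) * CV g d j s A B
        + w i s * PCV g d e P j s A B)
      + ∑ r, g i r P * ∑ s, w r s * CV g d j s A B
      + ∑ r, g j r P * ∑ s, w i s * CV g d r s A B)
    = ∑ s, w i s * Kex g d e j s P A B := by
  have h1 : ∑ r, g i r P * ∑ s, w r s * CV g d j s A B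
      = ∑ s, (∑ k, w k s * g i k P) * CV g d j s A B := by
    simp only [Finset.mul_sum, Finset.sum_mul]
    rw [Finset.sum_comm]
    exact Finset.sum_congr rfl fun s _ => Finset.sum_congr rfl fun k _ => by ring
  have h2 : ∑ s, w i s * ∑ r, g r s P * CV g d j r A B
      = ∑ s, (∑ k, w i k * g s k P) * CV g d j s A B := by
    simp only [Finset.mul_sum, Finset.sum_mul]
    rw [Finset.sum_comm]
    exact Finset.sum_congr rfl fun s _ => Finset.sum_congr rfl fun k _ => by ring
  have h3 : ∑ r, g j r P * ∑ s, w i s * CV g d r s A B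
      = ∑ s, w i s * ∑ r, g j r P * CV g d r s A B := by
    simp only [Finset.mul_sum]
    rw [Finset.sum_comm]
    exact Finset.sum_congr rfl fun s _ => Finset.sum_congr rfl fun r _ => by ring
  have h4 : ∑ s, w i s * Kex g d e j s P A B
      = ∑ s, w i s * PCV g d e P j s A B
        + (∑ s, w i s * ∑ r, g j r P * CV g d r s A B
          - ∑ s, w i s * ∑ r, g r s P * CV g d j r A B) := by
    rw [← Finset.sum_sub_distrib, ← Finset.sum_add_distrib]
    refine Finset.sum_congr rfl fun s _ => ?_
    simp only [Kex, Finset.sum_sub_distrib, mul_sub]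
    ring
  have h5 : ∑ s, ((-∑ k, w k s * g i k P - ∑ k, w i k * g s k P) * CV g d j s A B
        + w i s * PCV g d e P j s A B)
      = (∑ s, w i s * PCV g d e P j s A B - ∑ s, (∑ k, w k s * g i k P) * CV g d j s A B)
        - ∑ s, (∑ k, w i k * g s k P) * CV g d j s A B := by
    rw [← Finset.sum_sub_distrib, ← Finset.sum_sub_distrib]
    exact Finset.sum_congr rfl fun s _ => by ring
  linear_combination h5 + h1 + h3 - h4 + h2

theorem alg (w : Fin n → Fin n → ℝ) (g : Fin n → Fin n → Fin n → ℝ)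
    (d : Fin n → Fin n → Fin n → Fin n → ℝ)
    (e : Fin n → Fin n → Fin n → Fin n → Fin n → ℝ)
    (he : ∀ p q a b c, e p q a b c = e q p a b c) (i j p m m' : Fin n) :
    (∑ s, ((-∑ k, w k s * g i k p - ∑ k, w i k * g s k p) * CV g d j s m m'
        + w i s * PCV g d e p j s m m')
      + ∑ r, g i r p * ∑ s, w r s * CV g d j s m m'
      + ∑ r, g j r p * ∑ s, w i s * CV g d r s m m')
    + (∑ s, ((-∑ k, w k s * g i k m - ∑ k, w i k * g s k m) * CV g d j s m' p
        + w i s * PCV g d e m j s m' p)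
      + ∑ r, g i r m * ∑ s, w r s * CV g d j s m' p
      + ∑ r, g j r m * ∑ s, w i s * CV g d r s m' p)
    + (∑ s, ((-∑ k, w k s * g i k m' - ∑ k, w i k * g s k m') * CV g d j s p m
        + w i s * PCV g d e m' j s p m)
      + ∑ r, g i r m' * ∑ s, w r s * CV g d j s p m
      + ∑ r, g j r m' * ∑ s, w i s * CV g d r s p m) = 0 := by
  rw [blockEq w g d e i j p m m', blockEq w g d e i j m m' p, blockEq w g d e i j m' p m,
    ← Finset.sum_add_distrib, ← Finset.sum_add_distrib]
  refine Finset.sum_eq_zero fun s _ => ?_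
  have hz := Kzero g d e he j s p m m'
  linear_combination (w i s) * hz


/-- under Poisson-compatibility,
`dH^{ij} + Γ^i_{rp} dx^p ∧ H^{rj} + Γ^j_{rp} dx^p ∧ H^{ir} = 0`, i.e. the cyclic sum over
`(p,m,n)` of `∂_p H^{ij}_{mn} + Γ^i_{rp} H^{rj}_{mn} + Γ^j_{rp} H^{ir}_{mn}` vanishes. -/
theorem statement_11 (U : Set (Fin n → ℝ)) (hU : IsOpen U)
    (ω : Fin n → Fin n → (Fin n → ℝ) → ℝ)
    (Γ : Fin n → Fin n → Fin n → (Fin n → ℝ) → ℝ)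
    (hωs : ∀ i j, ContDiffOn ℝ (⊤ : ℕ∞) (ω i j) U)
    (hΓs : ∀ i j k, ContDiffOn ℝ (⊤ : ℕ∞) (Γ i j k) U)
    (hanti : ∀ i j, ∀ x ∈ U, ω i j x = - ω j i x)
    (hpc : PoissonCompat U ω Γ) :
    ∀ i j p m m' : Fin n, ∀ x ∈ U,
      (pd p (Hc ω Γ i j m m') x + ∑ r, Γ i r p x * Hc ω Γ r j m m' x
          + ∑ r, Γ j r p x * Hc ω Γ i r m m' x)
        + (pd m (Hc ω Γ i j m' p) x + ∑ r, Γ i r m x * Hc ω Γ r j m' p x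
            + ∑ r, Γ j r m x * Hc ω Γ i r m' p x)
        + (pd m' (Hc ω Γ i j p m) x + ∑ r, Γ i r m' x * Hc ω Γ r j p m x
            + ∑ r, Γ j r m' x * Hc ω Γ i r p m x) = 0 := by
  intro i j p m m' x hx
  have hHx : ∀ a b c d : Fin n, Hc ω Γ a b c d x
      = ∑ s, ω a s x * CV (fun a b c => Γ a b c x) (fun q a b c => pd q (Γ a b c) x) b s c d :=
    fun a b c d => Hc_val hU hωs hΓs hx a b c d
  rw [pd_Hc hU hωs hΓs hpc hx i j p m m', pd_Hc hU hωs hΓs hpc hx i j m m' p,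
    pd_Hc hU hωs hΓs hpc hx i j m' p m]
  simp only [hHx]
  exact alg (fun a b => ω a b x) (fun a b c => Γ a b c x) (fun q a b c => pd q (Γ a b c) x)
    (fun p q a b c => pd p (pd q (Γ a b c)) x)
    (fun p q a b c => pd_comm (hΓat hU hΓs hx a b c) p q) i j p m m'


end Stmt11
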